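/- Under the hypotheses of Theorem on convergence of gauge: with h < 0 smooth on compact M, c(s) = c₁ - c₂ s² (c₂ > 0), φ_s the solution of Δφ_s = c(s) - s² h e^{φ_s}, the family h e^{φ_s} converges uniformly on M to -c₂ as s → ∞. -/

import Mathlib

open Filter

/-- The Laplace–Beltrami operator on the flat torus `ℝⁿ/ℤⁿ`, realized on
`ℤⁿ`-periodic functions on Euclidean space. -/
noncomputable def lap {n : ℕ} (f : EuclideanSpace ℝ (Fin n) → ℝ)
    (x : EuclideanSpace ℝ (Fin n)) : ℝ :=
  ∑ i : Fin n, iteratedFDeriv ℝ 2 f x fun _ => EuclideanSpace.single i (1 : ℝ)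

/-- A function on `ℝⁿ` descending to the compact boundaryless manifold `ℝⁿ/ℤⁿ`. -/
def ZPeriodic {n : ℕ} (f : EuclideanSpace ℝ (Fin n) → ℝ) : Prop :=
  ∀ x i, f (x + EuclideanSpace.single i (1 : ℝ)) = f x

namespace HePhiAux

variable {n : ℕ}

lemma int_single {f : EuclideanSpace ℝ (Fin n) → ℝ} (hf : ZPeriodic f)
    (x : EuclideanSpace ℝ (Fin n)) (i : Fin n) (m : ℤ) :
    f (x + (m : ℝ) • EuclideanSpace.single i (1 : ℝ)) = f x := by
  induction m using Int.induction_on with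
  | zero => simp
  | succ k ih =>
    have : ((k : ℤ) + 1 : ℤ) = (k : ℤ) + 1 := rfl
    push_cast
    push_cast at ih
    rw [add_smul, one_smul, ← add_assoc, hf, ih]
  | pred k ih =>
    have key : x + ((-(k : ℝ) - 1) • EuclideanSpace.single i (1 : ℝ)) +
        EuclideanSpace.single i (1 : ℝ) = x + (-(k : ℝ)) • EuclideanSpace.single i (1:ℝ) := by
      rw [sub_smul, one_smul]
      abel
    push_cast
    calc f (x + (-(k : ℝ) - 1) • EuclideanSpace.single i (1:ℝ))
        = f (x + (-(k : ℝ) - 1) • EuclideanSpace.single i (1:ℝ) +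
            EuclideanSpace.single i (1:ℝ)) := (hf _ i).symm
      _ = f (x + (-(k : ℝ)) • EuclideanSpace.single i (1:ℝ)) := by rw [key]
      _ = f x := by push_cast at ih; exact ih

lemma int_combo {f : EuclideanSpace ℝ (Fin n) → ℝ} (hf : ZPeriodic f)
    (x : EuclideanSpace ℝ (Fin n)) (k : Fin n → ℤ) :
    f (x + ∑ i, (k i : ℝ) • EuclideanSpace.single i (1 : ℝ)) = f x := by
  classical
  have H : ∀ (t : Finset (Fin n)) (x : EuclideanSpace ℝ (Fin n)),
      f (x + ∑ i ∈ t, (k i : ℝ) • EuclideanSpace.single i (1 : ℝ)) = f x := by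
    intro t
    induction t using Finset.induction_on with
    | empty => intro x; simp
    | insert a t hnot ih =>
      intro x
      rw [Finset.sum_insert hnot, add_comm ((k a : ℝ) • _), ← add_assoc,
        int_single hf, ih]
  exact H Finset.univ x

/-- A continuous `ℤⁿ`-periodic function attains its maximum, at a point of norm `≤ n+1`. -/
lemma exists_max {f : EuclideanSpace ℝ (Fin n) → ℝ} (hc : Continuous f) (hf : ZPeriodic f) :
    ∃ x₀ ∈ Metric.closedBall (0 : EuclideanSpace ℝ (Fin n)) (n + 1), ∀ x, f x ≤ f x₀ := by
  obtain ⟨x₀, hx₀K, hmax⟩ := (isCompact_closedBall (0 : EuclideanSpace ℝ (Fin n))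
    (n + 1)).exists_isMaxOn (Metric.nonempty_closedBall.2 (by positivity)) hc.continuousOn
  refine ⟨x₀, hx₀K, fun x => ?_⟩
  set y : EuclideanSpace ℝ (Fin n) :=
    x + ∑ i, ((-⌊x i⌋ : ℤ) : ℝ) • EuclideanSpace.single i (1 : ℝ) with hy
  have hfy : f y = f x := int_combo hf x _
  have hyj : ∀ j, y j = Int.fract (x j) := by
    intro j
    have : (∑ i, ((-⌊x i⌋ : ℤ) : ℝ) • EuclideanSpace.single i (1 : ℝ)) j
        = ((-⌊x j⌋ : ℤ) : ℝ) := by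
      classical
      rw [WithLp.ofLp_sum, Finset.sum_apply]
      rw [Finset.sum_eq_single j]
      · simp [EuclideanSpace.single_apply]
      · intro i _ hij; simp [EuclideanSpace.single_apply, Ne.symm hij]
      · simp
    have : y j = x j + ((-⌊x j⌋ : ℤ) : ℝ) := by
      rw [hy, WithLp.ofLp_add, Pi.add_apply, this]
    rw [this, Int.fract]
    push_cast
    ring
  have hyK : y ∈ Metric.closedBall (0 : EuclideanSpace ℝ (Fin n)) (n + 1) := by
    rw [Metric.mem_closedBall, dist_zero_right]
    have hn : ‖y‖ ≤ Real.sqrt n := by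
      rw [EuclideanSpace.norm_eq]
      apply Real.sqrt_le_sqrt
      calc ∑ i, ‖y i‖ ^ 2 ≤ ∑ _i : Fin n, (1 : ℝ) := by
            apply Finset.sum_le_sum
            intro i _
            have h1 : ‖y i‖ ≤ 1 := by
              rw [hyj i, Real.norm_eq_abs, abs_le]
              constructor
              · linarith [Int.fract_nonneg (x i)]
              · linarith [Int.fract_lt_one (x i)]
            calc ‖y i‖ ^ 2 ≤ 1 ^ 2 := by
                  apply pow_le_pow_left₀ (norm_nonneg _) h1
              _ = 1 := one_pow 2
        _ = n := by simp
    calc ‖y‖ ≤ Real.sqrt n := hn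
      _ ≤ n + 1 := by
          nlinarith [Real.sq_sqrt (by positivity : (0:ℝ) ≤ (n:ℝ)),
            Real.sqrt_nonneg (n : ℝ)]
  calc f x = f y := hfy.symm
    _ ≤ f x₀ := hmax hyK

end HePhiAux

namespace HePhiAux

/-- Second derivative test: at a global max, the second derivative in any
direction is nonpositive. -/
lemma second_deriv_nonpos {f : EuclideanSpace ℝ (Fin n) → ℝ} (hf : ContDiff ℝ (⊤ : ℕ∞) f)
    {x₀ : EuclideanSpace ℝ (Fin n)} (hmax : ∀ x, f x ≤ f x₀) (v : EuclideanSpace ℝ (Fin n)) :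
    iteratedFDeriv ℝ 2 f x₀ (fun _ => v) ≤ 0 := by
  rw [iteratedFDeriv_two_apply]
  by_contra hlt
  push_neg at hlt
  set L : ℝ → EuclideanSpace ℝ (Fin n) := fun t => x₀ + t • v with hL
  have hLd : ∀ t : ℝ, HasDerivAt L v t := by
    intro t
    have h1 : HasDerivAt (fun t : ℝ => t • v) ((1:ℝ) • v) t :=
      (hasDerivAt_id t).smul_const v
    exact (by simpa using h1 : HasDerivAt (fun t : ℝ => t • v) v t).const_add x₀
  set g' : ℝ → ℝ := fun t => fderiv ℝ f (L t) v with hg'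
  have hgd : ∀ t : ℝ, HasDerivAt (fun t => f (L t)) (g' t) t := by
    intro t
    exact ((hf.differentiable (by simp) (L t)).hasFDerivAt).comp_hasDerivAt t (hLd t)
  -- second derivative of g at 0
  set a : ℝ := fderiv ℝ (fderiv ℝ f) x₀ v v with ha
  have hfd1 : ContDiff ℝ 1 (fderiv ℝ f) := hf.fderiv_right (WithTop.coe_le_coe.2 le_top)
  have hD2 : HasFDerivAt (fderiv ℝ f) (fderiv ℝ (fderiv ℝ f) x₀) x₀ :=
    (hfd1.differentiable one_ne_zero x₀).hasFDerivAt
  have happ : HasFDerivAt (fun y => fderiv ℝ f y v)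
      (((ContinuousLinearMap.apply ℝ ℝ v).comp (fderiv ℝ (fderiv ℝ f) x₀))) x₀ :=
    (ContinuousLinearMap.apply ℝ ℝ v).hasFDerivAt.comp x₀ hD2
  have hL0 : L 0 = x₀ := by simp [hL]
  have hg'd : HasDerivAt g' a 0 := by
    have happ' : HasFDerivAt (fun y => fderiv ℝ f y v)
        (((ContinuousLinearMap.apply ℝ ℝ v).comp (fderiv ℝ (fderiv ℝ f) x₀))) (L 0) := by
      rw [hL0]; exact happ
    have := happ'.comp_hasDerivAt 0 (hLd 0)
    exact this
  -- the slope of g' tends to a > 0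
  have hslope := hasDerivAt_iff_tendsto_slope.mp hg'd
  have hg'0 : g' 0 = 0 := by
    have hmax0 : IsLocalMax (fun t => f (L t)) 0 :=
      Filter.Eventually.of_forall (fun t => by simpa [hL0] using hmax (L t))
    have := hmax0.deriv_eq_zero
    rw [(hgd 0).deriv] at this
    exact this
  have hpos : ∀ᶠ t in nhdsWithin 0 (Set.Ioi (0:ℝ)), 0 < g' t := by
    have h2 : Filter.Tendsto (slope g' 0) (nhdsWithin 0 (Set.Ioi (0:ℝ))) (nhds a) :=
      hslope.mono_left (nhdsWithin_mono _ (fun t ht => by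
        simp only [Set.mem_compl_iff, Set.mem_singleton_iff]
        exact ne_of_gt ht))
    have h3 : ∀ᶠ t in nhdsWithin 0 (Set.Ioi (0:ℝ)), 0 < slope g' 0 t :=
      h2.eventually (eventually_gt_nhds hlt)
    filter_upwards [h3, self_mem_nhdsWithin] with t ht ht'
    rw [slope_def_field, hg'0, sub_zero] at ht
    have h4 : (0:ℝ) < t - 0 := by simpa using ht'
    have := mul_pos ht (by linarith : (0:ℝ) < t - 0)
    rw [div_mul_cancel₀] at this
    · exact this
    · exact ne_of_gt h4
  -- obtain an interval on which g' > 0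
  obtain ⟨u, hu, hsub⟩ := mem_nhdsGT_iff_exists_Ioo_subset.mp hpos
  have hu0 : (0:ℝ) < u := hu
  set δ : ℝ := u / 2 with hδ
  have hδ0 : 0 < δ := by positivity
  have hmono : StrictMonoOn (fun t => f (L t)) (Set.Icc 0 δ) := by
    apply strictMonoOn_of_deriv_pos (convex_Icc 0 δ)
    · exact (hf.continuous.comp (by continuity)).continuousOn
    · intro t ht
      rw [interior_Icc] at ht
      rw [(hgd t).deriv]
      exact hsub ⟨ht.1, lt_trans ht.2 (by linarith)⟩
  have hlt2 : f (L 0) < f (L δ) :=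
    hmono (Set.left_mem_Icc.2 hδ0.le) (Set.right_mem_Icc.2 hδ0.le) hδ0
  rw [hL0] at hlt2
  exact absurd (hmax (L δ)) (not_le.2 hlt2)

end HePhiAux

namespace HePhiAux

lemma lap_sub {f g : EuclideanSpace ℝ (Fin n) → ℝ} (hf : ContDiff ℝ (⊤ : ℕ∞) f)
    (hg : ContDiff ℝ (⊤ : ℕ∞) g) (x : EuclideanSpace ℝ (Fin n)) :
    lap (fun y => f y - g y) x = lap f x - lap g x := by
  unfold lap
  rw [← Finset.sum_sub_distrib]
  apply Finset.sum_congr rfl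
  intro i _
  have h1 : (fun y => f y - g y) = fun y => f y + (-g y) := by
    funext y; simp [sub_eq_add_neg]
  have h2 : (fun y => -g y) = -g := rfl
  rw [h1, iteratedFDeriv_add_apply' (hf.of_le (WithTop.coe_le_coe.2 le_top)).contDiffAt ((hg.of_le (WithTop.coe_le_coe.2 le_top)).neg).contDiffAt,
    h2, iteratedFDeriv_neg_apply]
  simp [sub_eq_add_neg]

lemma lap_continuous {f : EuclideanSpace ℝ (Fin n) → ℝ} (hf : ContDiff ℝ (⊤ : ℕ∞) f) :
    Continuous (lap f) := by
  apply continuous_finset_sum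
  intro i _
  exact (ContinuousMultilinearMap.apply ℝ (fun _ : Fin 2 => EuclideanSpace ℝ (Fin n)) ℝ
    (fun _ => EuclideanSpace.single i (1:ℝ))).continuous.comp
    (hf.continuous_iteratedFDeriv (WithTop.coe_le_coe.2 le_top))

end HePhiAux

/-- On a compact manifold without boundary (here the flat torus), with `h < 0` smooth
and `c(s) = c₁ - c₂ s²` (`c₂ > 0`), the solutions `φ_s` of
`Δφ_s = c(s) - s² h e^{φ_s}` satisfy `h e^{φ_s} → -c₂` uniformly as `s → ∞`, i.e.
`sup_M |h e^{φ_s} + c₂| → 0`. -/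
theorem he_phi_uniform_convergence {n : ℕ}
    (h : EuclideanSpace ℝ (Fin n) → ℝ) (hsm : ContDiff ℝ (⊤ : ℕ∞) h) (hper : ZPeriodic h)
    (hneg : ∀ x, h x < 0) (c₁ c₂ s₀ : ℝ) (hc₂ : 0 < c₂)
    (φ : ℝ → EuclideanSpace ℝ (Fin n) → ℝ)
    (hφ : ∀ s : ℝ, s₀ ≤ s → ContDiff ℝ (⊤ : ℕ∞) (φ s) ∧ ZPeriodic (φ s) ∧
      ∀ x, lap (φ s) x = (c₁ - c₂ * s ^ 2) - s ^ 2 * h x * Real.exp (φ s x)) :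
    Tendsto (fun s : ℝ => ⨆ x, |h x * Real.exp (φ s x) + c₂|) atTop (nhds 0) := by
  classical
  have hhpos : ∀ x, 0 < -h x := fun x => neg_pos.2 (hneg x)
  set ψ : EuclideanSpace ℝ (Fin n) → ℝ := fun x => Real.log (c₂ / (-h x)) with hψdef
  have hdivpos : ∀ x, 0 < c₂ / (-h x) := fun x => div_pos hc₂ (hhpos x)
  have hψsm : ContDiff ℝ (⊤ : ℕ∞) ψ := by
    apply ContDiff.log
    · exact contDiff_const.div hsm.neg (fun x => ne_of_gt (hhpos x))
    · exact fun x => ne_of_gt (hdivpos x)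
  have hψper : ZPeriodic ψ := fun x i => by simp only [hψdef, hper x i]
  have hexpψ : ∀ x, Real.exp (ψ x) = c₂ / (-h x) := fun x => Real.exp_log (hdivpos x)
  -- a bound on |lap ψ| on the ball where maxima live
  obtain ⟨C, hC⟩ : ∃ C, ∀ x ∈ Metric.closedBall (0 : EuclideanSpace ℝ (Fin n)) (n + 1),
      |lap ψ x| ≤ C := by
    obtain ⟨C, hC⟩ := (isCompact_closedBall (0 : EuclideanSpace ℝ (Fin n))
      (n + 1)).exists_bound_of_continuousOn (HePhiAux.lap_continuous hψsm).continuousOn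
    exact ⟨C, fun x hx => by simpa [Real.norm_eq_abs] using hC x hx⟩
  set K : ℝ := |C - c₁| + |C + c₁| with hKdef
  have hK0 : 0 ≤ K := by positivity
  -- key uniform estimate
  have key : ∀ s : ℝ, max s₀ 1 ≤ s → ∀ x, |h x * Real.exp (φ s x) + c₂| ≤ K / s ^ 2 := by
    intro s hs x
    have hs₀ : s₀ ≤ s := le_trans (le_max_left _ _) hs
    have hs1 : (1:ℝ) ≤ s := le_trans (le_max_right _ _) hs
    have hs2 : (0:ℝ) < s ^ 2 := by nlinarith
    obtain ⟨hφsm, hφper, heq⟩ := hφ s hs₀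
    set F : EuclideanSpace ℝ (Fin n) → ℝ := fun x => φ s x - ψ x with hFdef
    have hFsm : ContDiff ℝ (⊤ : ℕ∞) F := hφsm.sub hψsm
    have hFper : ZPeriodic F := fun x i => by simp only [hFdef, hφper x i, hψper x i]
    have hid : ∀ y, -h y * Real.exp (φ s y) = c₂ * Real.exp (F y) := by
      intro y
      have : φ s y = F y + ψ y := by simp [hFdef]
      have hne : h y ≠ 0 := ne_of_lt (hneg y)
      rw [this, Real.exp_add, hexpψ]
      field_simp
    -- maximum point of F
    obtain ⟨xp, hxpB, hxp⟩ := HePhiAux.exists_max hFsm.continuous hFper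
    -- minimum point of F
    obtain ⟨xm, hxmB, hxm'⟩ := HePhiAux.exists_max hFsm.neg.continuous
      (fun x i => by simp only [hFper x i])
    have hxm : ∀ x, F xm ≤ F x := fun x => by have := hxm' x; simpa using this
    -- lap F ≤ 0 at the max
    have hlapp : lap F xp ≤ 0 := by
      apply Finset.sum_nonpos
      intro i _
      exact HePhiAux.second_deriv_nonpos hFsm hxp _
    -- lap F ≥ 0 at the min
    have hlapm : 0 ≤ lap F xm := by
      apply Finset.sum_nonneg
      intro i _
      have h1 := HePhiAux.second_deriv_nonpos hFsm.neg hxm' (EuclideanSpace.single i (1:ℝ))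
      have h2 : (fun y => -F y) = -F := rfl
      rw [h2, iteratedFDeriv_neg_apply] at h1
      simp only [ContinuousMultilinearMap.neg_apply] at h1
      linarith
    -- upper estimate at xp
    have hup : c₂ * Real.exp (F xp) ≤ c₂ + K / s ^ 2 := by
      have h1 : lap (φ s) xp - lap ψ xp ≤ 0 := by
        rw [← HePhiAux.lap_sub hφsm hψsm]; exact hlapp
      have h2 := heq xp
      have h3 : |lap ψ xp| ≤ C := hC xp hxpB
      have h4 : s ^ 2 * (c₂ * Real.exp (F xp)) = s ^ 2 * (-h xp * Real.exp (φ s xp)) := by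
        rw [hid xp]
      have habs : C - c₁ ≤ K := by
        have := abs_nonneg (C + c₁); have := le_abs_self (C - c₁); simp only [hKdef]; linarith
      have h5 : K / s ^ 2 * s ^ 2 = K := div_mul_cancel₀ _ (ne_of_gt hs2)
      have h6 : s ^ 2 * (c₂ * Real.exp (F xp)) ≤ s ^ 2 * c₂ + K := by
        nlinarith [abs_le.mp h3]
      nlinarith [h6, h5, hs2]
    -- lower estimate at xm
    have hlo : c₂ - K / s ^ 2 ≤ c₂ * Real.exp (F xm) := by
      have h1 : 0 ≤ lap (φ s) xm - lap ψ xm := by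
        rw [← HePhiAux.lap_sub hφsm hψsm]; exact hlapm
      have h2 := heq xm
      have h3 : |lap ψ xm| ≤ C := hC xm hxmB
      have h4 : s ^ 2 * (c₂ * Real.exp (F xm)) = s ^ 2 * (-h xm * Real.exp (φ s xm)) := by
        rw [hid xm]
      have habs : C + c₁ ≤ K := by
        have := abs_nonneg (C - c₁); have := le_abs_self (C + c₁); simp only [hKdef]; linarith
      have h5 : K / s ^ 2 * s ^ 2 = K := div_mul_cancel₀ _ (ne_of_gt hs2)
      have h6 : s ^ 2 * c₂ - K ≤ s ^ 2 * (c₂ * Real.exp (F xm)) := by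
        nlinarith [abs_le.mp h3]
      nlinarith [h6, h5, hs2]
    -- combine
    have hval : h x * Real.exp (φ s x) + c₂ = c₂ - c₂ * Real.exp (F x) := by
      have := hid x; linarith
    have hmono1 : c₂ * Real.exp (F x) ≤ c₂ * Real.exp (F xp) :=
      mul_le_mul_of_nonneg_left (Real.exp_le_exp.2 (hxp x)) hc₂.le
    have hmono2 : c₂ * Real.exp (F xm) ≤ c₂ * Real.exp (F x) :=
      mul_le_mul_of_nonneg_left (Real.exp_le_exp.2 (hxm x)) hc₂.le
    rw [hval, abs_le]
    constructor <;> linarith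
  -- conclude by squeezing
  apply squeeze_zero' (g := fun s : ℝ => K / s ^ 2)
  · filter_upwards with s
    exact Real.iSup_nonneg fun x => abs_nonneg _
  · filter_upwards [eventually_ge_atTop (max s₀ 1)] with s hs
    exact ciSup_le (key s hs)
  · exact Filter.Tendsto.div_atTop tendsto_const_nhds (tendsto_pow_atTop two_ne_zero)
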